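/- arXiv:2410.02209 — 6 statements merged into one kernel-verified Lean document; each statement's English description precedes it below -/
import Mathlib

section
/- Let q be an odd prime power, η the quadratic character of F_q, and β ∈ F_q*. If ε ∈ {1,-1} satisfies ε·η(-β) = 1, then ∑_{θ ∈ F_q*, η(θ)=ε} η(θ - β) = -ε. -/
/-!
For `θ ≠ 0` and `ε = ±1`, the indicator of `η(θ) = ε` is `(1 + ε η(θ)) / 2`. Hence twice the sum is
`∑_{θ ≠ 0} η(θ - β) + ε ∑_θ η(θ) η(θ - β)`. The first sum is `-η(-β) = -ε`, because `η` sums to zero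
over `F`; the second is `-1`, being `η(-1)` times the Jacobi sum `J(η, η) = -η(-1)`.
-/

open Finset

lemma MulChar.IsQuadratic.sq_eq_one_of_isUnit {M R : Type*} [CommMonoid M] [CommRing R]
    {χ : MulChar M R} (hχ : χ.IsQuadratic) {a : M} (ha : IsUnit a) : χ a ^ 2 = 1 := by
  rw [← χ.pow_apply' two_ne_zero, hχ.sq_eq_one, MulChar.one_apply ha]

section

variable {F R : Type*} [Field F] [Fintype F] [CommRing R] [IsDomain R]

lemma MulChar.IsQuadratic.sum_mul_sub_eq_neg_one {χ : MulChar F R} (hχ : χ.IsQuadratic)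
    (hχ₁ : χ ≠ 1) {β : F} (hβ : β ≠ 0) : ∑ θ, χ θ * χ (θ - β) = -1 := by
  have hJ : jacobiSum χ χ = -χ (-1) := by
    simpa only [hχ.inv] using jacobiSum_nontrivial_inv hχ₁
  calc ∑ θ, χ θ * χ (θ - β)
      = ∑ x, χ (β * x) * χ (β * x - β) :=
        (Fintype.sum_equiv (Equiv.mulLeft₀ β hβ) _ _ fun _ => rfl).symm
    _ = ∑ x, χ (-1) * (χ x * χ (1 - x)) := by
        refine Fintype.sum_congr _ _ fun x => ?_
        rw [show β * x - β = -1 * β * (1 - x) by ring, map_mul, map_mul, map_mul]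
        linear_combination (χ (-1) * χ x * χ (1 - x)) * hχ.sq_eq_one_of_isUnit hβ.isUnit
    _ = -1 := by
        rw [← mul_sum, ← jacobiSum, hJ, mul_neg, ← sq,
          hχ.sq_eq_one_of_isUnit isUnit_one.neg]

variable [DecidableEq F]

lemma MulChar.sum_filter_ne_zero_sub_eq_neg {χ : MulChar F R} (hχ₁ : χ ≠ 1) (β : F) :
    ∑ θ ∈ univ.filter (fun θ : F => θ ≠ 0), χ (θ - β) = -χ (-β) := by
  have hshift : ∑ θ, χ (θ - β) = 0 := by
    rw [← MulChar.sum_eq_zero_of_ne_one hχ₁]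
    exact (Equiv.subRight β).sum_comp χ
  rw [filter_ne', sum_erase_eq_sub (mem_univ 0), hshift, zero_sub, zero_sub]

end

lemma two_mul_sum_filter_eq_of_forall_eq_one_or_neg_one {F : Type*} [Fintype F] [Zero F]
    [DecidableEq F] {g : F → ℤ} (hg₀ : g 0 = 0) (hg : ∀ θ ≠ 0, g θ = 1 ∨ g θ = -1) {ε : ℤ}
    (hε : ε = 1 ∨ ε = -1) (f : F → ℤ) :
    2 * ∑ θ ∈ univ.filter (fun θ : F => θ ≠ 0 ∧ g θ = ε), f θ
      = ∑ θ ∈ univ.filter (fun θ : F => θ ≠ 0), f θ + ε * ∑ θ, g θ * f θ := by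
  simp only [sum_filter, mul_sum, ← sum_add_distrib]
  refine sum_congr rfl fun θ _ => ?_
  by_cases hθ : θ = 0
  · simp [hθ, hg₀]
  · rcases hg θ hθ with h | h <;> rcases hε with rfl | rfl <;> simp [hθ, h] <;> ring

theorem stmt_1_general (F : Type*) [Field F] [Fintype F] [DecidableEq F]
    (hq : ringChar F ≠ 2) (β : F) (ε : ℤ)
    (h : ε * quadraticChar F (-β) = 1) :
    ∑ θ ∈ Finset.univ.filter (fun θ : F => θ ≠ 0 ∧ quadraticChar F θ = ε),
      quadraticChar F (θ - β) = -ε := by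
  have hε := Int.eq_one_or_neg_one_of_mul_eq_one h
  have hηβ : quadraticChar F (-β) = ε := by
    rcases Int.eq_one_or_neg_one_of_mul_eq_one' h with ⟨rfl, h'⟩ | ⟨rfl, h'⟩ <;> exact h'
  have hβ : β ≠ 0 := by
    rintro rfl
    simp at h
  have hsplit := two_mul_sum_filter_eq_of_forall_eq_one_or_neg_one (quadraticChar_zero (F := F))
    (fun θ hθ => quadraticChar_dichotomy hθ) hε (fun θ => quadraticChar F (θ - β))
  rw [(quadraticChar F).sum_filter_ne_zero_sub_eq_neg (quadraticChar_ne_one hq),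
    (quadraticChar_isQuadratic F).sum_mul_sub_eq_neg_one (quadraticChar_ne_one hq) hβ,
    hηβ] at hsplit
  linarith

/-- For an odd prime power `q`, `β ∈ F_q*`, and `ε ∈ {1,-1}` with
`ε·η(-β) = 1`, we have `∑_{θ ∈ F_q*, η(θ)=ε} η(θ - β) = -ε`. -/
theorem stmt_1 (F : Type*) [Field F] [Fintype F] [DecidableEq F]
    (hq : ringChar F ≠ 2) (β : F) (hβ : β ≠ 0) (ε : ℤ)
    (hε : ε = 1 ∨ ε = -1) (h : ε * quadraticChar F (-β) = 1) :
    ∑ θ ∈ Finset.univ.filter (fun θ : F => θ ≠ 0 ∧ quadraticChar F θ = ε),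
      quadraticChar F (θ - β) = -ε :=
  stmt_1_general F hq β ε h
end

section
/- Let q be an odd prime power, η the quadratic character of F_q, and β ∈ F_q*. If ε ∈ {1,-1} satisfies ε·η(-β) = -1, then ∑_{θ ∈ F_q*, η(θ)=ε} η(θ - β) = 0. -/
/-- For an odd prime power `q`, `β ∈ F_q*`, and `ε ∈ {1,-1}` with
`ε·η(-β) = -1`, we have `∑_{θ ∈ F_q*, η(θ)=ε} η(θ - β) = 0`. -/
theorem stmt_2 (F : Type*) [Field F] [Fintype F] [DecidableEq F]
    (hq : ringChar F ≠ 2) (β : F) (hβ : β ≠ 0) (ε : ℤ)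
    (hε : ε = 1 ∨ ε = -1) (h : ε * quadraticChar F (-β) = -1) :
    ∑ θ ∈ Finset.univ.filter (fun θ : F => θ ≠ 0 ∧ quadraticChar F θ = ε),
      quadraticChar F (θ - β) = 0 := by
  have hε2 : ε * ε = 1 := by rcases hε with h' | h' <;> simp [h']
  have hχβ : quadraticChar F (-β) = -ε := by
    have : ε * (ε * quadraticChar F (-β)) = ε * (-1) := by rw [h]
    rw [← mul_assoc, hε2, one_mul] at this
    linarith
  refine Finset.sum_involution (fun θ _ => β ^ 2 / θ) ?_ ?_ ?_ ?_
  · intro θ hθ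
    simp only [Finset.mem_filter, Finset.mem_univ, true_and] at hθ
    obtain ⟨hθ0, hθε⟩ := hθ
    have hinv : quadraticChar F θ⁻¹ = ε := by
      have h1 : quadraticChar F θ * quadraticChar F θ⁻¹ = 1 := by
        rw [← map_mul, mul_inv_cancel₀ hθ0, map_one]
      rw [hθε] at h1
      have := congrArg (ε * ·) h1
      simp only [← mul_assoc, hε2, one_mul, mul_one] at this
      exact this
    have key : β ^ 2 / θ - β = β * θ⁻¹ * (-(θ - β)) := by
      field_simp; ring
    rw [key, show (-(θ - β)) = (-1) * (θ - β) by ring, map_mul, map_mul, map_mul, hinv]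
    have hm : quadraticChar F (-1) * quadraticChar F β = -ε := by
      rw [← map_mul, neg_one_mul, hχβ]
    linear_combination (ε * quadraticChar F (θ - β)) * hm - quadraticChar F (θ - β) * hε2
  · intro θ hθ hf heq
    simp only [Finset.mem_filter, Finset.mem_univ, true_and] at hθ
    obtain ⟨hθ0, hθε⟩ := hθ
    have hsq : θ ^ 2 = β ^ 2 := by
      field_simp at heq
      linear_combination -heq
    have : (θ - β) * (θ + β) = 0 := by ring_nf; linear_combination hsq
    rcases mul_eq_zero.mp this with h1 | h1
    · exact hf (by rw [sub_eq_zero.mp h1, sub_self, quadraticChar_zero])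
    · have : θ = -β := eq_neg_of_add_eq_zero_left h1
      rw [this, hχβ] at hθε
      rcases hε with h' | h' <;> omega
  · intro θ hθ
    simp only [Finset.mem_filter, Finset.mem_univ, true_and] at hθ ⊢
    obtain ⟨hθ0, hθε⟩ := hθ
    have hne : β ^ 2 / θ ≠ 0 := div_ne_zero (pow_ne_zero 2 hβ) hθ0
    refine ⟨hne, ?_⟩
    have hinv : quadraticChar F θ⁻¹ = ε := by
      have h1 : quadraticChar F θ * quadraticChar F θ⁻¹ = 1 := by
        rw [← map_mul, mul_inv_cancel₀ hθ0, map_one]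
      rw [hθε] at h1
      have := congrArg (ε * ·) h1
      simp only [← mul_assoc, hε2, one_mul, mul_one] at this
      exact this
    rw [div_eq_mul_inv, map_mul, hinv, sq, map_mul]
    have := quadraticChar_sq_one hβ
    rw [sq] at this
    rw [this, one_mul]
  · intro θ hθ
    simp only [Finset.mem_filter, Finset.mem_univ, true_and] at hθ
    field_simp
end

section
/- Let p be an odd prime, q = p^m, f a quadratic form on F_{q^{s₁}} of rank R and sign ε_f, H an r-dimensional F_q-subspace on which f restricts with rank R_H and sign ε_H. If R_H is even, then ∑_{x ∈ H} ζ_p^{Tr_p^q(f(x))} = ε_H · q^r · (p*)^{-m·R_H/2}, where p* = (-1)^{(p-1)/2} p. -/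
/-!
In coordinates of a basis of `H` diagonalising `f`, `f x = ∑ i < R, λᵢ xᵢ²`, so the character sum
`∑ ψ (f x)` with `ψ = ζ_p ^ Tr` factors over the coordinates: each of the `r - R` free coordinates
contributes `q`, and the `i`-th diagonal one the quadratic Gauss sum `∑ₓ ψ (λᵢ x²) = η(λᵢ) G`.
Hence the sum is `ε q ^ (r - R) G ^ R`. Finally `G² = η(-1) q = (p*) ^ m` and `q² = (p*) ^ (2m)`,
so for even `R` this equals `ε q ^ r (p*) ^ (-m R / 2)`.
-/

open Module

/-- `f` restricted to the subspace `H` (of dimension `r`) is a quadratic form of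
rank `R` and sign `ε`. -/
def HasRankSignOn {F E : Type*} [Field F] [Fintype F] [DecidableEq F]
    [AddCommGroup E] [Module F E] (f : QuadraticForm F E) (H : Submodule F E)
    (r R : ℕ) (ε : ℤ) : Prop :=
  ∃ (hRr : R ≤ r) (b : Basis (Fin r) F H) (lam : Fin R → F),
    (∀ i, lam i ≠ 0) ∧
    (∀ x : H, f (x : E) = ∑ i : Fin R, lam i * (b.repr x (Fin.castLE hRr i)) ^ 2) ∧
    ε = quadraticChar F (∏ i, lam i)

namespace AddChar

lemma map_sum_eq_prod {A M ι : Type*} [AddCommMonoid A] [CommMonoid M] (ψ : AddChar A M)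
    (s : Finset ι) (g : ι → A) :
    ψ (∑ i ∈ s, g i) = ∏ i ∈ s, ψ (g i) := by
  classical
  induction s using Finset.induction_on with
  | empty => simp
  | insert a s ha ih => rw [Finset.sum_insert ha, Finset.prod_insert ha, map_add_eq_mul, ih]

lemma sum_pi_map_sum_eq_prod_sum {A M ι : Type*} [AddCommMonoid A] [Fintype A] [CommRing M]
    [Fintype ι] [DecidableEq ι] (ψ : AddChar A M) (g : ι → A → A) :
    ∑ u : ι → A, ψ (∑ i, g i (u i)) = ∏ i, ∑ x, ψ (g i x) := by
  simp only [Fintype.prod_sum, map_sum_eq_prod]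

end AddChar

lemma Fin.sum_comp_castLE {α M : Type*} [Fintype α] [AddCommMonoid M] {n r : ℕ} (h : n ≤ r)
    (g : (Fin n → α) → M) :
    ∑ c : Fin r → α, g (fun i => c (Fin.castLE h i)) = Fintype.card α ^ (r - n) • ∑ u, g u := by
  obtain ⟨k, rfl⟩ := Nat.exists_eq_add_of_le h
  have hcast : ∀ i : Fin n, Fin.castLE h i = Fin.castAdd k i := fun _ => rfl
  rw [← (Fin.appendEquiv n k).sum_comp, Fintype.sum_prod_type, Finset.smul_sum]
  simp [hcast]

lemma FiniteField.ringChar_ne_two_of_card_eq_pow {F : Type*} [Field F] [Fintype F] {p m : ℕ}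
    (hp : Odd p) (hcard : Fintype.card F = p ^ m) : ringChar F ≠ 2 := by
  rw [Ne, FiniteField.even_card_iff_char_two, hcard, ← Nat.even_iff, Nat.not_even_iff_odd]
  exact hp.pow

section QuadraticGaussSum

variable {F : Type*} [Field F] [Fintype F] [DecidableEq F]
  {R' : Type*} [CommRing R'] [IsDomain R'] {ψ : AddChar F R'}

local notation "η" => MulChar.ringHomComp (quadraticChar F) (Int.castRingHom R')

-- `#{x | x ^ 2 = a} = 1 + η a` and `∑ₐ ψ (b * a) = 0` leave the twisted Gauss sum `∑ₐ η a ψ (b * a)`.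
lemma sum_addChar_mul_sq (hF : ringChar F ≠ 2) (hψ : ψ.IsPrimitive) {b : F} (hb : b ≠ 0) :
    ∑ x : F, ψ (b * x ^ 2) = quadraticChar F b * gaussSum η ψ := by
  have hsqrts : ∑ x : F, ψ (b * x ^ 2) = ∑ a : F, ((quadraticChar F a : R') + 1) * ψ (b * a) := by
    rw [← Finset.sum_fiberwise_of_maps_to' (g := fun x : F => x ^ 2)
      (fun x _ => Finset.mem_univ (x ^ 2)) (fun a : F => ψ (b * a))]
    refine Finset.sum_congr rfl fun a _ => ?_
    rw [Finset.sum_const, nsmul_eq_mul]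
    congr 1
    rw [← Set.toFinset_ofPred]
    have h := congrArg (Int.cast : ℤ → R') (quadraticChar_card_sqrts hF a)
    rw [Int.cast_natCast] at h
    rw [h, Int.cast_add, Int.cast_one]
  have hzero : ∑ a : F, ψ (b * a) = 0 := AddChar.sum_eq_zero_of_ne_one (hψ hb)
  have hsq : η b * η b = 1 := by
    rw [MulChar.ringHomComp_apply, ← map_mul, ← sq, quadraticChar_sq_one hb, map_one]
  have hshift := gaussSum_mulShift η ψ (Units.mk0 b hb)
  rw [Units.val_mk0] at hshift
  calc ∑ x : F, ψ (b * x ^ 2) = gaussSum η (ψ.mulShift b) := by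
        simp only [hsqrts, add_mul, one_mul, Finset.sum_add_distrib, hzero, add_zero]; rfl
    _ = η b * (η b * gaussSum η (ψ.mulShift b)) := by rw [← mul_assoc, hsq, one_mul]
    _ = quadraticChar F b * gaussSum η ψ := by rw [hshift]; rfl

lemma HasRankSignOn.sum_addChar {E : Type*} [AddCommGroup E] [Module F E]
    {f : QuadraticForm F E} {H : Submodule F E} [Fintype H] {r R : ℕ} {ε : ℤ}
    (hf : HasRankSignOn f H r R ε) (hF : ringChar F ≠ 2) (hψ : ψ.IsPrimitive) :
    ∑ x : H, ψ (f x) = ε * Fintype.card F ^ (r - R) * gaussSum η ψ ^ R := by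
  obtain ⟨hRr, b, lam, hlam, hfx, rfl⟩ := hf
  calc ∑ x : H, ψ (f x)
      = ∑ c : Fin r → F, ψ (∑ i, lam i * c (Fin.castLE hRr i) ^ 2) :=
        Fintype.sum_equiv b.equivFun _ _ fun x => by simp [hfx]
    _ = Fintype.card F ^ (r - R) • ∏ i, ∑ x : F, ψ (lam i * x ^ 2) := by
        rw [Fin.sum_comp_castLE hRr (fun u => ψ (∑ i, lam i * u i ^ 2)),
          AddChar.sum_pi_map_sum_eq_prod_sum ψ fun i x => lam i * x ^ 2]
    _ = Fintype.card F ^ (r - R) • ∏ i, (quadraticChar F (lam i) * gaussSum η ψ) := by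
        simp only [sum_addChar_mul_sq hF hψ (hlam _)]
    _ = _ := by
        rw [Finset.prod_mul_distrib, map_prod, Int.cast_prod, Finset.prod_const,
          Finset.card_univ, Fintype.card_fin, nsmul_eq_mul]
        push_cast
        ring

-- `η (-1) = χ₄ q = χ₄ p ^ m = (-1) ^ ((p - 1) / 2 * m)`.
lemma gaussSum_quadraticChar_sq [CharZero R'] {p m : ℕ} (hp : Odd p)
    (hcard : Fintype.card F = p ^ m) (hψ : ψ.IsPrimitive) :
    gaussSum η ψ ^ 2 = ((-1) ^ ((p - 1) / 2) * p) ^ m := by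
  have hF := FiniteField.ringChar_ne_two_of_card_eq_pow hp hcard
  have hη : η ≠ 1 :=
    (MulChar.ringHomComp_ne_one_iff (RingHom.injective_int _)).mpr (quadraticChar_ne_one hF)
  have hhalf : p / 2 = (p - 1) / 2 := by have := Nat.odd_iff.mp hp; omega
  rw [gaussSum_sq hη ((quadraticChar_isQuadratic F).comp _) hψ, MulChar.ringHomComp_apply,
    quadraticChar_neg_one hF, hcard, Nat.cast_pow, map_pow,
    ZMod.χ₄_eq_neg_one_pow (Nat.odd_iff.mp hp), hhalf, eq_intCast]
  push_cast
  ring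

end QuadraticGaussSum

section TraceCharacter

variable (p : ℕ) [Fact p.Prime] (F : Type*) [Field F] [Algebra (ZMod p) F]

noncomputable def traceAddChar : AddChar F ℂ :=
  (AddChar.zmodChar p (Complex.isPrimitiveRoot_exp p (NeZero.ne p)).pow_eq_one).compAddMonoidHom
    (Algebra.trace (ZMod p) F).toAddMonoidHom

lemma traceAddChar_apply (x : F) :
    traceAddChar p F x
      = Complex.exp (2 * Real.pi * Complex.I / p) ^ (Algebra.trace (ZMod p) F x).val :=
  rfl

lemma traceAddChar_isPrimitive [Finite F] : (traceAddChar p F).IsPrimitive := by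
  refine AddChar.IsPrimitive.of_ne_one fun h => ?_
  obtain ⟨x, hx⟩ := Algebra.trace_surjective (ZMod p) F 1
  have h1 : traceAddChar p F x = 1 := by rw [h, AddChar.one_apply]
  rw [traceAddChar_apply, hx, ZMod.val_one, pow_one] at h1
  exact (Complex.isPrimitiveRoot_exp p (NeZero.ne p)).ne_one (Fact.out : p.Prime).one_lt h1

end TraceCharacter

theorem stmt_9_general (p : ℕ) [Fact p.Prime] (hp : p ≠ 2) (m : ℕ) (F : Type*)
    [Field F] [Fintype F] [DecidableEq F] [Algebra (ZMod p) F]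
    (hcard : Fintype.card F = p ^ m)
    (E₁ : Type*) [AddCommGroup E₁] [Module F E₁] [Fintype E₁]
    (f : QuadraticForm F E₁) (H : Submodule F E₁)
    [DecidablePred (fun x : E₁ => x ∈ H)]
    (r R : ℕ) (ε : ℤ)
    (hf : HasRankSignOn f H r R ε) (heven : Even R) :
    ∑ x : H, Complex.exp (2 * Real.pi * Complex.I / p)
        ^ (Algebra.trace (ZMod p) F (f (x : E₁))).val
      = (ε : ℂ) * (Fintype.card F : ℂ) ^ r
          * ((-1 : ℂ) ^ ((p - 1) / 2) * (p : ℂ)) ^ (-((m * R / 2 : ℕ) : ℤ)) := by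
  obtain ⟨k, rfl⟩ := heven
  have hRr : k + k ≤ r := hf.fst
  have hp_odd : Odd p := (Fact.out : p.Prime).odd_of_ne_two hp
  have hψ := traceAddChar_isPrimitive p F
  set P : ℂ := (-1) ^ ((p - 1) / 2) * p
  have hP : P ≠ 0 := mul_ne_zero (pow_ne_zero _ (by norm_num)) (by exact_mod_cast NeZero.ne p)
  have hG : gaussSum ((quadraticChar F).ringHomComp (Int.castRingHom ℂ)) (traceAddChar p F)
      ^ (k + k) = (P ^ m) ^ k := by
    rw [← two_mul, pow_mul, gaussSum_quadraticChar_sq hp_odd hcard hψ]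
  have hP2 : P ^ 2 = (p : ℂ) ^ 2 := by
    rw [mul_pow, ← pow_mul, pow_mul', neg_one_sq, one_pow, one_mul]
  have hq : (Fintype.card F : ℂ) ^ 2 = (P ^ m) ^ 2 :=
    calc (Fintype.card F : ℂ) ^ 2 = ((p : ℂ) ^ 2) ^ m := by rw [hcard]; push_cast; ring
      _ = (P ^ m) ^ 2 := by rw [← hP2]; ring
  have hmk : m * (k + k) / 2 = m * k := by
    rw [← two_mul, mul_left_comm, Nat.mul_div_cancel_left _ two_pos]
  simp_rw [← traceAddChar_apply]
  rw [hf.sum_addChar (FiniteField.ringChar_ne_two_of_card_eq_pow hp_odd hcard) hψ, hG, hmk,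
    zpow_neg, zpow_natCast, pow_mul, pow_sub₀ _ (by simp) hRr, ← two_mul, pow_mul, hq]
  field_simp
  ring

/-- If `f|_H` has even rank `R_H` and sign `ε_H` on the
`r`-dimensional subspace `H`, then
`∑_{x ∈ H} ζ_p^{Tr(f(x))} = ε_H q^r (p*)^{-m R_H/2}` with `p* = (-1)^{(p-1)/2} p`. -/
theorem stmt_9 (p : ℕ) [Fact p.Prime] (hp : p ≠ 2) (m : ℕ) (F : Type*)
    [Field F] [Fintype F] [DecidableEq F] [Algebra (ZMod p) F]
    (hcard : Fintype.card F = p ^ m)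
    (E₁ : Type*) [AddCommGroup E₁] [Module F E₁] [Fintype E₁]
    (f : QuadraticForm F E₁) (H : Submodule F E₁)
    [DecidablePred (fun x : E₁ => x ∈ H)]
    (r R : ℕ) (ε : ℤ)
    (hH : finrank F H = r) (hf : HasRankSignOn f H r R ε) (heven : Even R) :
    ∑ x : H, Complex.exp (2 * Real.pi * Complex.I / p)
        ^ (Algebra.trace (ZMod p) F (f (x : E₁))).val
      = (ε : ℂ) * (Fintype.card F : ℂ) ^ r
          * ((-1 : ℂ) ^ ((p - 1) / 2) * (p : ℂ)) ^ (-((m * R / 2 : ℕ) : ℤ)) :=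
  stmt_9_general p hp m F hcard E₁ f H r R ε hf heven
end

section
/- Let q be an odd prime power, f : F_{q^{s₁}} → F_q a quadratic form, and β ∈ F_q*. For every F_q-subspace H of F_{q^{s₁}} × F_{q^{s₂}} of dimension r ≥ 1, and α ∈ F_{q^{s₂}}*, the number of elements (x,y) ∈ H with f(x) + Tr_q^{q^{s₂}}(αy) = β is at most 2q^{r-1}. -/
open Module Polynomial

lemma aux_quad_card {F : Type*} [Field F] [Fintype F] (a b c : F) (hc : c ≠ 0) :
    Nat.card {t : F // a + b * t + c * (t * t) = 0} ≤ 2 := by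
  classical
  set p : F[X] := C c * X ^ 2 + C b * X + C a with hp
  have hpne : p ≠ 0 := by
    intro h
    apply hc
    have := congrArg (fun q : F[X] => q.coeff 2) h
    simpa [hp, coeff_C] using this
  have hdeg : p.natDegree ≤ 2 := by rw [hp]; compute_degree
  have key : ∀ t : F, a + b * t + c * (t * t) = 0 → t ∈ p.roots.toFinset := by
    intro t ht
    rw [Multiset.mem_toFinset, mem_roots hpne]
    show p.eval t = 0
    simp only [hp, eval_add, eval_mul, eval_pow, eval_C, eval_X]
    linear_combination ht
  have hinj : Function.Injective
      (fun z : {t : F // a + b * t + c * (t * t) = 0} =>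
        (⟨z.1, key z.1 z.2⟩ : {x // x ∈ p.roots.toFinset})) := by
    intro z₁ z₂ h
    simpa [Subtype.ext_iff] using h
  calc Nat.card {t : F // a + b * t + c * (t * t) = 0}
      ≤ Nat.card {x // x ∈ p.roots.toFinset} := Nat.card_le_card_of_injective _ hinj
    _ = p.roots.toFinset.card := by
        rw [Nat.card_eq_fintype_card, Fintype.card_coe]
    _ ≤ Multiset.card p.roots := p.roots.toFinset_card_le
    _ ≤ p.natDegree := p.card_roots'
    _ ≤ 2 := hdeg

lemma aux_fiber_card {S Q : Type*} [Finite S] [Finite Q] (σ : S → Q) (n : ℕ)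
    (h : ∀ c : Q, Nat.card {z : S // σ z = c} ≤ n) :
    Nat.card S ≤ n * Nat.card Q := by
  classical
  cases nonempty_fintype S
  cases nonempty_fintype Q
  rw [Nat.card_eq_fintype_card, Nat.card_eq_fintype_card]
  calc Fintype.card S = Fintype.card (Σ c : Q, {z : S // σ z = c}) :=
        (Fintype.card_congr (Equiv.sigmaFiberEquiv σ)).symm
    _ = ∑ c : Q, Fintype.card {z : S // σ z = c} := Fintype.card_sigma
    _ ≤ ∑ _c : Q, n := Finset.sum_le_sum fun c _ => by
        rw [← Nat.card_eq_fintype_card]; exact h c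
    _ = n * Fintype.card Q := by rw [Finset.sum_const, smul_eq_mul, mul_comm, Fintype.card]

noncomputable def auxL (F : Type*) [Field F] (E₁ E₂ : Type*) [Field E₁] [Field E₂]
    [Algebra F E₁] [Algebra F E₂] (α : E₂) (H : Submodule F (E₁ × E₂)) :
    H →ₗ[F] F where
  toFun z := Algebra.trace F E₂ (α * (z : E₁ × E₂).2)
  map_add' x y := by simp [mul_add]
  map_smul' c x := by simp [mul_smul_comm]

@[simp] lemma auxL_apply (F : Type*) [Field F] (E₁ E₂ : Type*) [Field E₁] [Field E₂]
    [Algebra F E₁] [Algebra F E₂] (α : E₂) (H : Submodule F (E₁ × E₂)) (z : H) :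
    auxL F E₁ E₂ α H z = Algebra.trace F E₂ (α * (z : E₁ × E₂).2) := rfl

set_option maxHeartbeats 1000000

/-- For a quadratic form `f` on `F_{q^{s₁}}`, `β ∈ F_q*`,
`α ∈ F_{q^{s₂}}*` and any `r`-dimensional subspace `H` of
`F_{q^{s₁}} × F_{q^{s₂}}` with `r ≥ 1`, the number of `(x,y) ∈ H` with
`f(x) + Tr(αy) = β` is at most `2q^{r-1}`. -/
theorem stmt_10 (F : Type*) [Field F] [Fintype F] (hq : ringChar F ≠ 2)
    (E₁ E₂ : Type*) [Field E₁] [Field E₂] [Algebra F E₁] [Algebra F E₂]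
    [Fintype E₁] [Fintype E₂]
    (f : QuadraticForm F E₁) (β : F) (hβ : β ≠ 0) (α : E₂) (hα : α ≠ 0)
    (r : ℕ) (hr : 1 ≤ r) (H : Submodule F (E₁ × E₂)) (hH : finrank F H = r) :
    Nat.card {xy : E₁ × E₂ // xy ∈ H ∧ f xy.1 + Algebra.trace F E₂ (α * xy.2) = β}
      ≤ 2 * Fintype.card F ^ (r - 1) := by
  classical
  by_cases hcase : ∃ v ∈ H, f v.1 ≠ 0
  · obtain ⟨v, hvH, hv⟩ := hcase
    set v' : H := ⟨v, hvH⟩ with hv'def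
    have hvne : v' ≠ 0 := by
      intro h
      apply hv
      have hv0 : v = 0 := by simpa [hv'def, Subtype.ext_iff] using h
      rw [hv0]
      exact f.map_zero
    set W : Submodule F H := F ∙ v' with hWdef
    have hW1 : finrank F W = 1 := finrank_span_singleton hvne
    have hQr : finrank F (H ⧸ W) = r - 1 := by
      have h2 := Submodule.finrank_quotient_add_finrank W
      rw [hH] at h2
      omega
    set σ : {xy : E₁ × E₂ // xy ∈ H ∧ f xy.1 + Algebra.trace F E₂ (α * xy.2) = β}
        → H ⧸ W := fun z => Submodule.Quotient.mk ⟨z.1, z.2.1⟩ with hσdef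
    have hfib : ∀ c : H ⧸ W, Nat.card {z // σ z = c} ≤ 2 := by
      intro c
      obtain ⟨w, hw⟩ := Submodule.Quotient.mk_surjective W c
      set A : F := f (w : E₁ × E₂).1
          + Algebra.trace F E₂ (α * (w : E₁ × E₂).2) - β with hAdef
      set B : F := QuadraticMap.polar f (w : E₁ × E₂).1 v.1
          + Algebra.trace F E₂ (α * v.2) with hBdef
      have key : ∀ z : {z // σ z = c}, ∃ t : F,
          A + B * t + f v.1 * (t * t) = 0 ∧
          (z.1.1 : E₁ × E₂) = (w : E₁ × E₂) + t • v := by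
        intro z
        have h1 : σ z.1 = Submodule.Quotient.mk w := by rw [z.2, ← hw]
        have h2 : (⟨z.1.1, z.1.2.1⟩ : H) - w ∈ W := (Submodule.Quotient.eq W).mp h1
        obtain ⟨t, ht⟩ := Submodule.mem_span_singleton.mp h2
        have hsum : (⟨z.1.1, z.1.2.1⟩ : H) = w + t • v' :=
          sub_eq_iff_eq_add'.mp ht.symm
        have hval : (z.1.1 : E₁ × E₂) = (w : E₁ × E₂) + t • v := by
          have := congrArg (Subtype.val) hsum
          simpa [hv'def] using this
        refine ⟨t, ?_, hval⟩
        have heq := z.1.2.2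
        rw [hval] at heq
        simp only [Prod.fst_add, Prod.snd_add, Prod.smul_fst, Prod.smul_snd] at heq
        rw [QuadraticMap.map_add ⇑f, QuadraticMap.map_smul,
          QuadraticMap.polar_smul_right, mul_add, mul_smul_comm, map_add,
          map_smul] at heq
        simp only [smul_eq_mul, hAdef, hBdef] at heq ⊢
        linear_combination heq
      have hinj : Function.Injective
          (fun z : {z // σ z = c} =>
            (⟨Classical.choose (key z), (Classical.choose_spec (key z)).1⟩ :
              {t : F // A + B * t + f v.1 * (t * t) = 0})) := by
        intro z₁ z₂ h
        have h1 := (Classical.choose_spec (key z₁)).2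
        have h2 := (Classical.choose_spec (key z₂)).2
        have ht : Classical.choose (key z₁) = Classical.choose (key z₂) := by
          simpa [Subtype.ext_iff] using h
        have hvv : (z₁.1.1 : E₁ × E₂) = z₂.1.1 := by rw [h1, h2, ht]
        exact Subtype.ext (Subtype.ext hvv)
      calc Nat.card {z // σ z = c}
          ≤ Nat.card {t : F // A + B * t + f v.1 * (t * t) = 0} :=
            Nat.card_le_card_of_injective _ hinj
        _ ≤ 2 := aux_quad_card A B (f v.1) hv
    calc Nat.card {xy : E₁ × E₂ // xy ∈ H ∧ f xy.1 + Algebra.trace F E₂ (α * xy.2) = β}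
        ≤ 2 * Nat.card (H ⧸ W) := aux_fiber_card σ 2 hfib
      _ = 2 * Fintype.card F ^ (r - 1) := by
          haveI := Fintype.ofFinite (H ⧸ W)
          rw [Nat.card_eq_fintype_card, card_eq_pow_finrank (K := F), hQr]
  · push_neg at hcase
    set L : H →ₗ[F] F := auxL F E₁ E₂ α H with hLdef
    have hGL : ∀ z : H, f (z : E₁ × E₂).1 + Algebra.trace F E₂ (α * (z : E₁ × E₂).2)
        = L z := by
      intro z
      rw [hcase _ z.2]
      simp [hLdef]
    by_cases hS : Nonempty {xy : E₁ × E₂ // xy ∈ H ∧ f xy.1 + Algebra.trace F E₂ (α * xy.2) = β}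
    · obtain ⟨⟨z₀, hz₀H, hz₀⟩⟩ := hS
      have hz₀L : L ⟨z₀, hz₀H⟩ = β := by rw [← hGL]; exact hz₀
      have hmem : ∀ z : {xy : E₁ × E₂ // xy ∈ H ∧ f xy.1 + Algebra.trace F E₂ (α * xy.2) = β},
          (⟨z.1, z.2.1⟩ : H) - ⟨z₀, hz₀H⟩ ∈ LinearMap.ker L := by
        intro z
        rw [LinearMap.mem_ker, map_sub, hz₀L, ← hGL, z.2.2, sub_self]
      have hinj : Function.Injective
          (fun z : {xy : E₁ × E₂ // xy ∈ H ∧ f xy.1 + Algebra.trace F E₂ (α * xy.2) = β} =>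
            (⟨⟨z.1, z.2.1⟩ - ⟨z₀, hz₀H⟩, hmem z⟩ : LinearMap.ker L)) := by
        intro z₁ z₂ h
        have h1 : (⟨z₁.1, z₁.2.1⟩ : H) - ⟨z₀, hz₀H⟩ = ⟨z₂.1, z₂.2.1⟩ - ⟨z₀, hz₀H⟩ := by
          simpa [Subtype.ext_iff] using h
        have h2 : (⟨z₁.1, z₁.2.1⟩ : H) = ⟨z₂.1, z₂.2.1⟩ := sub_left_inj.mp h1
        exact Subtype.ext (by simpa [Subtype.ext_iff] using h2)
      have hrange : LinearMap.range L = ⊤ := by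
        rw [eq_top_iff]
        intro x _
        have hβmem : β ∈ LinearMap.range L := ⟨_, hz₀L⟩
        have := Submodule.smul_mem _ (x * β⁻¹) hβmem
        rwa [smul_eq_mul, mul_assoc, inv_mul_cancel₀ hβ, mul_one] at this
      have hker : finrank F (LinearMap.ker L) = r - 1 := by
        have h1 := LinearMap.finrank_range_add_finrank_ker L
        rw [hrange, finrank_top, finrank_self, hH] at h1
        omega
      calc Nat.card {xy : E₁ × E₂ // xy ∈ H ∧ f xy.1 + Algebra.trace F E₂ (α * xy.2) = β}
          ≤ Nat.card (LinearMap.ker L) := Nat.card_le_card_of_injective _ hinj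
        _ = Fintype.card F ^ (r - 1) := by
            haveI := Fintype.ofFinite (LinearMap.ker L)
            rw [Nat.card_eq_fintype_card, card_eq_pow_finrank (K := F), hker]
        _ ≤ 2 * Fintype.card F ^ (r - 1) := by omega
    · rw [not_nonempty_iff] at hS
      rw [Nat.card_of_isEmpty]
      exact Nat.zero_le _
end

section
/- Let p be an odd prime, q = p^m, f a quadratic form on F_{q^{s₁}} with associated linearized map L_f, and b ∈ F_{q^{s₁}} with b ∉ Im(L_f). Then for every z ∈ F_q*, ∑_{x ∈ F_{q^{s₁}}} ζ_p^{Tr_p^q(z·f(x) - Tr_q^{q^{s₁}}(z·b·x))} = 0. -/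
/-!
Since `L` is self-adjoint for the nondegenerate trace form, `Im L = (ker L)ᗮ`, so `b ∉ Im L`
provides `y ∈ ker L` with `Tr(b y)` any prescribed value; prescribe it so that
`Tr_p^q(z Tr(b y)) ≠ 0`. Translating `x` by `y` leaves `f` unchanged (its polar form vanishes on
`ker L`) and multiplies every summand by the same nontrivial `p`-th root of unity, so the sum is
zero.
-/

namespace LinearMap.BilinForm

variable {K V : Type*} [Field K] [AddCommGroup V] [Module K V] [FiniteDimensional K V]

theorem range_eq_orthogonal_ker {B : LinearMap.BilinForm K V} (hB : B.Nondegenerate)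
    (hB₀ : B.IsRefl) {T : V →ₗ[K] V} (hT : ∀ x y, B (T x) y = B x (T y)) :
    LinearMap.range T = B.orthogonal (LinearMap.ker T) := by
  have h : B.orthogonal (LinearMap.range T) = LinearMap.ker T := by
    ext y
    simp only [mem_orthogonal_iff, LinearMap.mem_range, forall_exists_index,
      forall_apply_eq_imp_iff, hT, LinearMap.mem_ker]
    exact ⟨hB.2 _, fun hy x => by rw [hy, map_zero]⟩
  rw [← h, orthogonal_orthogonal hB hB₀]

end LinearMap.BilinForm

theorem exists_ker_trace_mul_eq_of_notMem_range {F E : Type*} [Field F] [Field E] [Algebra F E]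
    [FiniteDimensional F E] [Algebra.IsSeparable F E] {L : E →ₗ[F] E}
    (hL : ∀ x y, Algebra.trace F E (x * L y) = Algebra.trace F E (y * L x))
    {b : E} (hb : b ∉ LinearMap.range L) (w : F) :
    ∃ y, L y = 0 ∧ Algebra.trace F E (b * y) = w := by
  have hrange := LinearMap.BilinForm.range_eq_orthogonal_ker (traceForm_nondegenerate F E)
    (Algebra.traceForm_isSymm (R := F) (S := E)).isRefl (T := L) fun x y => by
      simp only [Algebra.traceForm_apply]; rw [mul_comm, hL]
  obtain ⟨y₀, hLy₀, hby₀⟩ : ∃ y₀, L y₀ = 0 ∧ Algebra.trace F E (b * y₀) ≠ 0 := by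
    rw [hrange] at hb
    simpa [LinearMap.BilinForm.mem_orthogonal_iff, mul_comm] using hb
  refine ⟨(w / Algebra.trace F E (b * y₀)) • y₀, by rw [map_smul, hLy₀, smul_zero], ?_⟩
  rw [mul_smul_comm, map_smul, smul_eq_mul, div_mul_cancel₀ _ hby₀]

theorem Fintype.sum_eq_zero_of_map_add_eq_mul {G M : Type*} [AddGroup G] [Fintype G]
    [Semiring M] [IsRightCancelMulZero M] {φ : G → M} {y : G} {a : M} (ha : a ≠ 1)
    (h : ∀ x, φ (x + y) = a * φ x) : ∑ x, φ x = 0 :=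
  eq_zero_of_mul_eq_self_left ha <| calc
    a * ∑ x, φ x = ∑ x, φ (x + y) := by simp only [Finset.mul_sum, h]
    _ = ∑ x, φ x := Equiv.sum_comp (Equiv.addRight y) φ

theorem stmt_16_general (p : ℕ) [Fact p.Prime] (F : Type*)
    [Field F] [Fintype F] [Algebra (ZMod p) F]
    (E₁ : Type*) [Field E₁] [Fintype E₁] [Algebra F E₁]
    (f : QuadraticForm F E₁) (L : E₁ →ₗ[F] E₁)
    (hfL : ∀ x : E₁, f x = Algebra.trace F E₁ (x * L x))
    (hsym : ∀ x y : E₁, Algebra.trace F E₁ (x * L y) = Algebra.trace F E₁ (y * L x))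
    (b : E₁) (hb : b ∉ LinearMap.range L) (z : F) (hz : z ≠ 0) :
    ∑ x : E₁, Complex.exp (2 * Real.pi * Complex.I / p)
        ^ (Algebra.trace (ZMod p) F
            (z * f x - Algebra.trace F E₁ (algebraMap F E₁ z * b * x))).val
      = 0 := by
  obtain ⟨w, hw⟩ : ∃ w, Algebra.trace (ZMod p) F (z * w) ≠ 0 := by
    by_contra! h
    exact hz ((traceForm_nondegenerate (ZMod p) F).1 z h)
  obtain ⟨y, hLy, hby⟩ := exists_ker_trace_mul_eq_of_notMem_range hsym hb w
  have hf : ∀ x, f (x + y) = f x := fun x => by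
    rw [hfL, hfL, map_add, hLy, add_zero, add_mul, map_add, hsym y, hLy, mul_zero, map_zero,
      add_zero]
  have hzby : Algebra.trace F E₁ (algebraMap F E₁ z * b * y) = z * w := by
    rw [mul_assoc, ← Algebra.smul_def, map_smul, hby, smul_eq_mul]
  set c := Algebra.trace (ZMod p) F (z * w)
  let e : E₁ → ZMod p := fun x =>
    Algebra.trace (ZMod p) F (z * f x - Algebra.trace F E₁ (algebraMap F E₁ z * b * x))
  have he : ∀ x, e (x + y) = -c + e x := fun x => by
    simp only [e]
    rw [hf, mul_add, map_add, hzby, ← sub_sub, map_sub, neg_add_eq_sub]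
  have hζ := Complex.isPrimitiveRoot_exp p (NeZero.ne p)
  let ψ := AddChar.zmodChar p hζ.pow_eq_one
  have hψ : ψ (-c) ≠ 1 := by
    rwa [Ne, (AddChar.zmodChar_primitive_of_primitive_root p hζ).zmod_char_eq_one_iff, neg_eq_zero]
  exact Fintype.sum_eq_zero_of_map_add_eq_mul (φ := fun x => ψ (e x)) hψ fun x => by
    rw [he, AddChar.map_add_eq_mul]

/-- For a quadratic form `f` on `F_{q^{s₁}}` with linearized map
`L_f` (so `f(x) = Tr(x L_f(x))` with symmetric polar form `Tr(x L_f(y))`) and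
`b ∉ Im(L_f)`, for every `z ∈ F_q*`:
`∑_x ζ_p^{Tr_p^q(z f(x) - Tr_q^{q^{s₁}}(z b x))} = 0`. -/
theorem stmt_16 (p : ℕ) [Fact p.Prime] (hp : p ≠ 2) (F : Type*)
    [Field F] [Fintype F] [Algebra (ZMod p) F]
    (E₁ : Type*) [Field E₁] [Fintype E₁] [Algebra F E₁]
    (f : QuadraticForm F E₁) (L : E₁ →ₗ[F] E₁)
    (hfL : ∀ x : E₁, f x = Algebra.trace F E₁ (x * L x))
    (hsym : ∀ x y : E₁, Algebra.trace F E₁ (x * L y) = Algebra.trace F E₁ (y * L x))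
    (b : E₁) (hb : b ∉ LinearMap.range L) (z : F) (hz : z ≠ 0) :
    ∑ x : E₁, Complex.exp (2 * Real.pi * Complex.I / p)
        ^ (Algebra.trace (ZMod p) F
            (z * f x - Algebra.trace F E₁ (algebraMap F E₁ z * b * x))).val
      = 0 :=
  stmt_16_general p F E₁ f L hfL hsym b hb z hz
end

section
/- Let q be an odd prime power, f a quadratic form on F_{q^{s₁}} of even rank R with sign ε_f, α ∈ F_{q^{s₂}}*, β ∈ F_q, ε = η((-1)^{R/2})·ε_f, and s = s₁+s₂. For (u,v) with v = α/z for some z ∈ F_q* and u ∈ Im(L_f) with β + f(x_{zu}) = 0 (where L_f(x_{zu}) = -zu/2), the number of (x,y) ∈ F_{q^{s₁}} × F_{q^{s₂}} satisfying both f(x) + Tr_q^{q^{s₂}}(αy) = β and Tr_q^{q^{s₁}}(ux) + Tr_q^{q^{s₂}}(vy) = 0 equals q^{s-2}(1 + (q-1)·ε·q^{-R/2}). -/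
/-!
Since `α = z v`, the second equation says `Tr(v y) = -Tr(u x)`, and then the first one becomes
`f x - z Tr(u x) = β`; for each such `x` the admissible `y` form an affine hyperplane of
`F_{q^{s₂}}`. Completing the square, `x ↦ x + x_{zu}` turns the condition on `x` into `f x = 0`.
In coordinates diagonalising `f`, the number of zeros of a nondegenerate diagonal form in `2k`
variables is `q^{2k-1} + η((-1)^k Δ) (q - 1) q^{k-1}`: split off two variables at a time, count
the binary forms with the Jacobi sum `J(η, η) = -η(-1)`, and combine the counts by convolution.
-/

open Module

open Finset

section CenteredDelta

variable {G : Type*} [AddGroup G] [Fintype G] [DecidableEq G]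

/-- The function `v` of Lidl–Niederreiter (Def. 6.22). -/
def centeredDelta (G : Type*) [AddGroup G] [Fintype G] [DecidableEq G] (b : G) : ℤ :=
  if b = 0 then Fintype.card G - 1 else -1

lemma sum_centeredDelta_mul (g : G → ℤ) :
    ∑ s, centeredDelta G s * g s = Fintype.card G * g 0 - ∑ s, g s := by
  have h : ∀ s, centeredDelta G s * g s
      = (if s = 0 then (Fintype.card G : ℤ) * g s else 0) - g s := fun s => by
    unfold centeredDelta
    split_ifs <;> ring
  simp [h, sum_sub_distrib]

lemma sum_centeredDelta : ∑ s : G, centeredDelta G s = 0 := by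
  simpa using sum_centeredDelta_mul (G := G) (fun _ => 1)

lemma sum_centeredDelta_sub (a : G) : ∑ s, centeredDelta G (a - s) = 0 := by
  rw [← sum_centeredDelta (G := G)]
  exact Equiv.sum_comp (Equiv.subLeft a) (centeredDelta G)

lemma sum_centeredDelta_mul_centeredDelta_sub (a : G) :
    ∑ s, centeredDelta G s * centeredDelta G (a - s) = Fintype.card G * centeredDelta G a := by
  rw [sum_centeredDelta_mul, sub_zero, sum_centeredDelta_sub, sub_zero]

lemma sum_centeredDelta_convolution (c₁ c₂ x : ℤ) (a : G) :
    ∑ s, ((Fintype.card G : ℤ) + c₁ * centeredDelta G s)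
        * (x + c₂ * centeredDelta G (a - s))
      = Fintype.card G * (Fintype.card G * x + c₁ * c₂ * centeredDelta G a) := by
  have h : ∀ s,
      ((Fintype.card G : ℤ) + c₁ * centeredDelta G s) * (x + c₂ * centeredDelta G (a - s))
        = Fintype.card G * x + c₁ * x * centeredDelta G s
          + Fintype.card G * c₂ * centeredDelta G (a - s)
          + c₁ * c₂ * (centeredDelta G s * centeredDelta G (a - s)) := fun s => by ring
  simp only [h, sum_add_distrib, ← mul_sum, sum_const, card_univ, nsmul_eq_mul, sum_centeredDelta,
    sum_centeredDelta_sub, sum_centeredDelta_mul_centeredDelta_sub]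
  ring

end CenteredDelta

lemma card_add_eq_sum_card_mul_card {A B G : Type*} [Fintype A] [Fintype B]
    [AddCommGroup G] [Fintype G] (g : A → G) (h : B → G) (a : G) :
    Nat.card {p : A × B // g p.1 + h p.2 = a}
      = ∑ s, Nat.card {x // g x = s} * Nat.card {y // h y = a - s} := by
  classical
  simp only [Nat.card_eq_fintype_card, Fintype.card_subtype]
  rw [card_eq_sum_card_fiberwise (f := fun p => g p.1) (t := univ) (by simp)]
  refine sum_congr rfl fun s _ => ?_
  rw [← card_product]
  congr 1
  ext ⟨x, y⟩
  simp only [mem_filter, mem_univ, true_and, mem_product]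
  constructor
  · rintro ⟨hxy, rfl⟩
    exact ⟨rfl, eq_sub_of_add_eq' hxy⟩
  · rintro ⟨rfl, hy⟩
    exact ⟨by rw [hy, add_sub_cancel], rfl⟩

lemma card_diagonal_form_succ_succ {R : Type*} [CommRing R] [Fintype R] {n : ℕ}
    (lam : Fin (n + 2) → R) (a : R) :
    Nat.card {c : Fin (n + 2) → R // ∑ i, lam i * c i ^ 2 = a}
      = ∑ s, Nat.card {p : R × R // lam 0 * p.1 ^ 2 + lam 1 * p.2 ^ 2 = s}
          * Nat.card {d : Fin n → R // ∑ i, lam i.succ.succ * d i ^ 2 = a - s} := by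
  let e : (R × R) × (Fin n → R) ≃ (Fin (n + 2) → R) :=
    (Equiv.prodAssoc R R _).trans
      ((Equiv.prodCongrRight fun _ => Fin.consEquiv fun _ => R).trans (Fin.consEquiv fun _ => R))
  rw [← card_add_eq_sum_card_mul_card]
  refine (Nat.card_congr (e.subtypeEquiv fun p => ?_)).symm
  simp [e, Fin.sum_univ_succ, add_assoc]

section QuadraticCharacter

variable {F : Type*} [Field F] [Fintype F] [DecidableEq F]

lemma sum_quadraticChar_mul_left (hF : ringChar F ≠ 2) {μ : F} (hμ : μ ≠ 0) :
    ∑ s, quadraticChar F (μ * s) = 0 :=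
  (Equiv.sum_comp (Equiv.mulLeft₀ μ hμ) _).trans (quadraticChar_sum_zero hF)

lemma sum_quadraticChar_mul_sub (hF : ringChar F ≠ 2) (a : F) :
    ∑ s, quadraticChar F (s * (a - s)) = quadraticChar F (-1) * centeredDelta F a := by
  rcases eq_or_ne a 0 with rfl | ha
  · have h : ∀ s : F, quadraticChar F (s * (0 - s))
        = quadraticChar F (-1) * (1 - if s = 0 then 1 else 0) := fun s => by
      rw [show s * (0 - s) = -1 * s ^ 2 by ring, map_mul]
      split_ifs with hs
      · simp [hs]
      · rw [quadraticChar_sq_one' hs, sub_zero]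
    rw [sum_congr rfl fun s _ => h s, ← mul_sum, sum_sub_distrib]
    simp [centeredDelta]
  · have hJ : jacobiSum (quadraticChar F) (quadraticChar F) = -quadraticChar F (-1) := by
      simpa only [(quadraticChar_isQuadratic F).inv] using
        jacobiSum_nontrivial_inv (quadraticChar_ne_one hF)
    rw [← Equiv.sum_comp (Equiv.mulLeft₀ a ha)]
    simp only [Equiv.mulLeft₀_apply,
      show ∀ t, a * t * (a - a * t) = a ^ 2 * (t * (1 - t)) from fun t => by ring, map_mul,
      quadraticChar_sq_one' ha, one_mul]
    rw [← jacobiSum, hJ, centeredDelta, if_neg ha]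
    ring

lemma card_mul_sq_eq (hF : ringChar F ≠ 2) {μ : F} (hμ : μ ≠ 0) (s : F) :
    (Nat.card {t : F // μ * t ^ 2 = s} : ℤ) = quadraticChar F (μ * s) + 1 := by
  have e : {t : F // μ * t ^ 2 = s} ≃ {t : F | t ^ 2 = μ⁻¹ * s} :=
    Equiv.subtypeEquivRight fun t => by rw [Set.mem_ofPred_eq, eq_inv_mul_iff_mul_eq₀ hμ]
  rw [Nat.card_congr e, Nat.card_eq_card_toFinset, quadraticChar_card_sqrts hF,
    show μ⁻¹ * s = μ * s * μ⁻¹ ^ 2 by field_simp, map_mul,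
    quadraticChar_sq_one' (inv_ne_zero hμ), mul_one]

lemma card_binary_diagonal_form (hF : ringChar F ≠ 2) {μ ν : F} (hμ : μ ≠ 0)
    (hν : ν ≠ 0) (a : F) :
    (Nat.card {p : F × F // μ * p.1 ^ 2 + ν * p.2 ^ 2 = a} : ℤ)
      = Fintype.card F + quadraticChar F (-(μ * ν)) * centeredDelta F a := by
  have hsub : ∑ s, quadraticChar F (ν * (a - s)) = 0 := by
    rw [← sum_quadraticChar_mul_left hF hν]
    exact Equiv.sum_comp (Equiv.subLeft a) fun s => quadraticChar F (ν * s)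
  have hsummand : ∀ s, (quadraticChar F (μ * s) + 1) * (quadraticChar F (ν * (a - s)) + 1)
      = quadraticChar F (μ * ν) * quadraticChar F (s * (a - s)) + quadraticChar F (μ * s)
        + quadraticChar F (ν * (a - s)) + 1 := by
    intro s
    rw [← map_mul, show μ * ν * (s * (a - s)) = μ * s * (ν * (a - s)) by ring,
      map_mul (quadraticChar F) (μ * s)]
    ring
  rw [card_add_eq_sum_card_mul_card (fun t => μ * t ^ 2) (fun t => ν * t ^ 2)]
  push_cast
  simp only [card_mul_sq_eq hF hμ, card_mul_sq_eq hF hν, hsummand, sum_add_distrib, ← mul_sum,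
    sum_quadraticChar_mul_sub hF, sum_quadraticChar_mul_left hF hμ, hsub, sum_const, card_univ,
    nsmul_eq_mul, mul_one]
  rw [show -(μ * ν) = μ * ν * (-1) by ring]
  simp only [map_mul]
  ring

theorem card_diagonal_form_of_even (hF : ringChar F ≠ 2) (n : ℕ) (hn : Even n)
    (lam : Fin n → F) (hlam : ∀ i, lam i ≠ 0) (a : F) :
    (Fintype.card F : ℤ) * Nat.card {c : Fin n → F // ∑ i, lam i * c i ^ 2 = a}
      = (Fintype.card F : ℤ) ^ n
        + quadraticChar F ((-1) ^ (n / 2) * ∏ i, lam i) * (Fintype.card F : ℤ) ^ (n / 2)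
          * centeredDelta F a := by
  induction n using Nat.twoStepInduction generalizing a with
  | zero =>
    rcases eq_or_ne a 0 with rfl | ha
    · simp [centeredDelta]
    · simp [centeredDelta, ha, ha.symm]
  | one => exact absurd hn Nat.not_even_one
  | more n ih _ =>
    have hsign : quadraticChar F ((-1) ^ ((n + 2) / 2) * ∏ i, lam i)
        = quadraticChar F (-(lam 0 * lam 1))
          * quadraticChar F ((-1) ^ (n / 2) * ∏ i : Fin n, lam i.succ.succ) := by
      rw [← map_mul, show (n + 2) / 2 = n / 2 + 1 by omega, Fin.prod_univ_succ,
        Fin.prod_univ_succ, Fin.succ_zero_eq_one]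
      ring_nf
    rw [hsign, card_diagonal_form_succ_succ, Nat.cast_sum, mul_sum]
    simp only [Nat.cast_mul, mul_left_comm (Fintype.card F : ℤ),
      ih (by simpa [Nat.even_add] using hn) _ (fun i => hlam i.succ.succ),
      card_binary_diagonal_form hF (hlam 0) (hlam 1), sum_centeredDelta_convolution,
      show (n + 2) / 2 = n / 2 + 1 by omega]
    ring

theorem card_zeros_of_hasRankSignOn {E : Type*} [AddCommGroup E] [Module F E]
    (hF : ringChar F ≠ 2) (f : QuadraticForm F E) {r R : ℕ} {ε : ℤ}
    (hf : HasRankSignOn f ⊤ r R ε) (hR : Even R) :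
    (Nat.card {x : E // f x = 0} : ℚ)
      = (Fintype.card F : ℚ) ^ ((r : ℤ) - 1)
        * (1 + ((Fintype.card F : ℚ) - 1) * ((quadraticChar F ((-1) ^ (R / 2)) * ε : ℤ) : ℚ)
          * (Fintype.card F : ℚ) ^ (-((R / 2 : ℕ) : ℤ))) := by
  obtain ⟨hRr, b, lam, hlam, hdiag, hε⟩ := hf
  obtain ⟨m, rfl⟩ := Nat.exists_eq_add_of_le hRr
  let coords : E ≃ (Fin R → F) × (Fin m → F) :=
    (Submodule.topEquiv.symm.trans b.equivFun).toEquiv.trans (Fin.appendEquiv R m).symm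
  have e : {x : E // f x = 0}
      ≃ {d : Fin R → F // ∑ i, lam i * d i ^ 2 = 0} × (Fin m → F) :=
    (coords.subtypeEquiv (q := fun p => ∑ i, lam i * p.1 i ^ 2 = 0) fun x =>
      (congrArg (· = 0) (hdiag ⟨x, trivial⟩)).to_iff).trans
      (Equiv.prodSubtypeFstEquivSubtypeProd (β := Fin m → F)
        (p := fun d : Fin R → F => ∑ i, lam i * d i ^ 2 = 0))
  have hdiag0 := card_diagonal_form_of_even hF R hR lam hlam 0
  rw [map_mul, ← hε, centeredDelta, if_pos rfl] at hdiag0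
  have hq : (Fintype.card F : ℚ) ≠ 0 := Nat.cast_ne_zero.mpr Fintype.card_ne_zero
  rw [Nat.card_congr e, Nat.card_prod, Nat.card_fun, Nat.card_fin,
    Nat.card_eq_fintype_card (α := F)]
  obtain ⟨k, rfl⟩ := hR
  rw [show (k + k) / 2 = k by omega] at hdiag0 ⊢
  have hZ : (Fintype.card F : ℚ) * Nat.card {d : Fin (k + k) → F // ∑ i, lam i * d i ^ 2 = 0}
      = (Fintype.card F : ℚ) ^ (k + k) + quadraticChar F ((-1) ^ k) * ε
        * (Fintype.card F : ℚ) ^ k * ((Fintype.card F : ℚ) - 1) := by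
    exact_mod_cast hdiag0
  rw [zpow_neg, zpow_sub_one₀ hq, zpow_natCast, zpow_natCast]
  apply mul_left_cancel₀ hq
  push_cast
  rw [← mul_assoc, hZ]
  field_simp
  ring

end QuadraticCharacter

theorem card_fiber_mul_card_of_surjective {V W : Type*} [AddGroup V] [Fintype V] [AddMonoid W]
    [Fintype W] [DecidableEq W] (φ : V →+ W) (hφ : Function.Surjective φ) (w : W) :
    #{x | φ x = w} * Fintype.card W = Fintype.card V := by
  calc #{x | φ x = w} * Fintype.card W = ∑ w', #{x | φ x = w'} := by
        rw [sum_congr rfl fun w' _ => AddMonoidHom.card_fiber_eq_of_mem_range φ (hφ w') (hφ w),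
          sum_const, card_univ, smul_eq_mul, mul_comm]
    _ = Fintype.card V := (card_eq_sum_card_fiberwise (by simp)).symm

theorem card_trace_mul_eq {F E : Type*} [Field F] [Fintype F] [Field E] [Fintype E]
    [Algebra F E] {v : E} (hv : v ≠ 0) (c : F) :
    (Nat.card {y : E // Algebra.trace F E (v * y) = c} : ℚ)
      = (Fintype.card F : ℚ) ^ ((finrank F E : ℤ) - 1) := by
  classical
  let φ : E →+ F := ((Algebra.trace F E).comp (LinearMap.mulLeft F v)).toAddMonoidHom
  have hφ : Function.Surjective φ :=
    (Algebra.trace_surjective F E).comp (mulLeft_bijective₀ v hv).surjective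
  have h := card_fiber_mul_card_of_surjective φ hφ c
  rw [Module.card_eq_pow_finrank (K := F) (V := E)] at h
  rw [Nat.card_eq_fintype_card, Fintype.card_subtype, zpow_sub_one₀ (by simp), zpow_natCast,
    ← Nat.cast_pow, ← h]
  push_cast
  field_simp
  rfl

theorem card_solutions_trace_system {F A E : Type*} [Field F] [Fintype F] [Fintype A] [Field E]
    [Fintype E] [Algebra F E] (g h : A → F) {α v : E} {z : F} (hv : v ≠ 0) (hα : α = z • v)
    (β : F) :
    (Nat.card {p : A × E // g p.1 + Algebra.trace F E (α * p.2) = β ∧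
        h p.1 + Algebra.trace F E (v * p.2) = 0} : ℚ)
      = Nat.card {x // g x - z * h x = β}
        * (Fintype.card F : ℚ) ^ ((finrank F E : ℤ) - 1) := by
  classical
  have htr : ∀ y, Algebra.trace F E (α * y) = z * Algebra.trace F E (v * y) := fun y => by
    rw [hα, smul_mul_assoc, map_smul, smul_eq_mul]
  have hfiber : ∀ x, (Nat.card {y : E // g x + Algebra.trace F E (α * y) = β ∧
      h x + Algebra.trace F E (v * y) = 0} : ℚ)
        = if g x - z * h x = β then (Fintype.card F : ℚ) ^ ((finrank F E : ℤ) - 1) else 0 := by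
    intro x
    split_ifs with hx
    · have e : {y : E // g x + Algebra.trace F E (α * y) = β ∧
          h x + Algebra.trace F E (v * y) = 0} ≃ {y : E // Algebra.trace F E (v * y) = -h x} :=
        Equiv.subtypeEquivRight fun y => by
          rw [htr]
          constructor
          · rintro ⟨-, hy⟩
            linear_combination hy
          · intro hy
            rw [hy]
            exact ⟨by linear_combination hx, by ring⟩
      rw [Nat.card_congr e, card_trace_mul_eq hv]
    · simp only [Nat.cast_eq_zero, Nat.card_eq_zero]
      left
      refine ⟨fun ⟨y, hy₁, hy₂⟩ => hx ?_⟩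
      rw [htr] at hy₁
      linear_combination hy₁ - z * hy₂
  rw [Nat.card_congr (Equiv.subtypeProdEquivSigmaSubtype fun x y =>
      g x + Algebra.trace F E (α * y) = β ∧ h x + Algebra.trace F E (v * y) = 0),
    Nat.card_sigma, Nat.cast_sum, sum_congr rfl fun x _ => hfiber x, sum_ite, sum_const_zero,
    add_zero, sum_const, nsmul_eq_mul, Nat.card_eq_fintype_card, Fintype.card_subtype]

theorem apply_add_eq_of_trace_form {F E : Type*} [Field F] [Field E] [Algebra F E]
    (hF : ringChar F ≠ 2) (f : E → F) (L : E →ₗ[F] E)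
    (hfL : ∀ x, f x = Algebra.trace F E (x * L x))
    (hsym : ∀ x y, Algebra.trace F E (x * L y) = Algebra.trace F E (y * L x))
    {x₀ u : E} {z : F} (hx₀ : L x₀ = -(z • u) / 2) (x : E) :
    f (x + x₀) = f x - z * Algebra.trace F E (u * x) + f x₀ := by
  have hLx₀ : L x₀ = (-z / 2) • u := by
    rw [hx₀, Algebra.smul_def, Algebra.smul_def, map_div₀, map_neg, map_ofNat]
    ring
  have hpolar : Algebra.trace F E (x * L x₀) + Algebra.trace F E (x₀ * L x)
      = -z * Algebra.trace F E (u * x) := by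
    rw [hsym x₀ x, ← two_mul, hLx₀, mul_smul_comm, map_smul, smul_eq_mul, mul_comm x u]
    field_simp [Ring.two_ne_zero hF]
  rw [hfL, hfL, hfL, map_add, show (x + x₀) * (L x + L x₀)
      = x * L x + x₀ * L x₀ + (x * L x₀ + x₀ * L x) by ring, map_add, map_add, map_add,
    hpolar]
  ring

theorem stmt_18_general (F : Type*) [Field F] [Fintype F] [DecidableEq F]
    (hq : ringChar F ≠ 2)
    (E₁ E₂ : Type*) [Field E₁] [Field E₂] [Algebra F E₁] [Algebra F E₂]
    [Fintype E₁] [Fintype E₂]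
    (f : QuadraticForm F E₁) (L : E₁ →ₗ[F] E₁)
    (hfL : ∀ x : E₁, f x = Algebra.trace F E₁ (x * L x))
    (hsym : ∀ x y : E₁, Algebra.trace F E₁ (x * L y) = Algebra.trace F E₁ (y * L x))
    (R : ℕ) (εf : ℤ) (hf : HasRankSignOn f ⊤ (finrank F E₁) R εf) (heven : Even R)
    (α : E₂) (hα : α ≠ 0) (β : F)
    (z : F) (v : E₂) (hv : α = z • v)
    (u : E₁) (xzu : E₁) (hxzu : L xzu = -(z • u) / 2) (hβ : β + f xzu = 0) :
    (Nat.card {xy : E₁ × E₂ //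
        f xy.1 + Algebra.trace F E₂ (α * xy.2) = β ∧
        Algebra.trace F E₁ (u * xy.1) + Algebra.trace F E₂ (v * xy.2) = 0} : ℚ)
      = (Fintype.card F : ℚ) ^ (finrank F E₁ + finrank F E₂ - 2)
          * (1 + ((Fintype.card F : ℚ) - 1)
              * ((quadraticChar F ((-1) ^ (R / 2)) * εf : ℤ) : ℚ)
              * (Fintype.card F : ℚ) ^ (-((R / 2 : ℕ) : ℤ))) := by
  have hv₀ : v ≠ 0 := by
    rintro rfl
    exact hα (by rw [hv, smul_zero])
  have hshift :
      {x : E₁ // f x - z * Algebra.trace F E₁ (u * x) = β} ≃ {w : E₁ // f w = 0} :=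
    (Equiv.addRight xzu).subtypeEquiv fun x => by
      rw [Equiv.coe_addRight, apply_add_eq_of_trace_form hq f L hfL hsym hxzu x]
      constructor <;> intro h
      · linear_combination h + hβ
      · linear_combination h - hβ
  have hexp : (Fintype.card F : ℚ) ^ (finrank F E₁ + finrank F E₂ - 2)
      = (Fintype.card F : ℚ) ^ ((finrank F E₁ : ℤ) - 1)
        * (Fintype.card F : ℚ) ^ ((finrank F E₂ : ℤ) - 1) := by
    have h₁ : 0 < finrank F E₁ := finrank_pos
    have h₂ : 0 < finrank F E₂ := finrank_pos
    rw [← zpow_add₀ (by simp), ← zpow_natCast]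
    congr 1
    omega
  rw [card_solutions_trace_system f (fun x => Algebra.trace F E₁ (u * x)) hv₀ hv β,
    Nat.card_congr hshift, card_zeros_of_hasRankSignOn hq f hf heven, hexp]
  ring

/-- Let `f` have even rank `R` and sign `ε_f`, `ε = η((-1)^{R/2})ε_f`,
`α = z v` with `z ∈ F_q*`, `u ∈ Im L_f` with `L_f(x_{zu}) = -zu/2` and
`β + f(x_{zu}) = 0`. Then the number of `(x,y)` with `f(x) + Tr(αy) = β` and
`Tr(ux) + Tr(vy) = 0` is `q^{s-2}(1 + (q-1) ε q^{-R/2})`. -/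
theorem stmt_18 (F : Type*) [Field F] [Fintype F] [DecidableEq F]
    (hq : ringChar F ≠ 2)
    (E₁ E₂ : Type*) [Field E₁] [Field E₂] [Algebra F E₁] [Algebra F E₂]
    [Fintype E₁] [Fintype E₂]
    (f : QuadraticForm F E₁) (L : E₁ →ₗ[F] E₁)
    (hfL : ∀ x : E₁, f x = Algebra.trace F E₁ (x * L x))
    (hsym : ∀ x y : E₁, Algebra.trace F E₁ (x * L y) = Algebra.trace F E₁ (y * L x))
    (R : ℕ) (εf : ℤ) (hf : HasRankSignOn f ⊤ (finrank F E₁) R εf) (heven : Even R)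
    (α : E₂) (hα : α ≠ 0) (β : F)
    (z : F) (hz : z ≠ 0) (v : E₂) (hv : α = z • v)
    (u : E₁) (xzu : E₁) (hxzu : L xzu = -(z • u) / 2) (hβ : β + f xzu = 0) :
    (Nat.card {xy : E₁ × E₂ //
        f xy.1 + Algebra.trace F E₂ (α * xy.2) = β ∧
        Algebra.trace F E₁ (u * xy.1) + Algebra.trace F E₂ (v * xy.2) = 0} : ℚ)
      = (Fintype.card F : ℚ) ^ (finrank F E₁ + finrank F E₂ - 2)
          * (1 + ((Fintype.card F : ℚ) - 1)
              * ((quadraticChar F ((-1) ^ (R / 2)) * εf : ℤ) : ℚ)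
              * (Fintype.card F : ℚ) ^ (-((R / 2 : ℕ) : ℤ))) :=
  stmt_18_general F hq E₁ E₂ f L hfL hsym R εf hf heven α hα β z v hv u xzu hxzu hβ
end
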